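/- arXiv:2011.03205 — 2 statements merged into one kernel-verified Lean document; each statement's English description precedes it below -/
import Mathlib

section
/- Let G be a 3-rank-connected graph with at least 6 vertices. Then for every vertex v, G∖v or G/v is prime and 3^{+2}-rank-connected. -/
open Finset

variable {V : Type} [Fintype V] [DecidableEq V]

open scoped Classical

/-- The rank over GF(2) of the `X × Y` submatrix of the adjacency matrix of `G`. -/
noncomputable def cutRankOn (G : SimpleGraph V) (X Y : Finset V) : ℕ :=
  (Matrix.of (fun (i : ↥X) (j : ↥Y) => if G.Adj i.1 j.1 then (1 : ZMod 2) else 0)).rank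

/-- The cut-rank of `X` in the graph `G` restricted to the vertex set `S`:
the rank over GF(2) of the `X × (S \ X)` submatrix of the adjacency matrix. -/
noncomputable def cutRank (G : SimpleGraph V) (S X : Finset V) : ℕ :=
  cutRankOn G X (S \ X)

/-- `A` gives a split of the graph `G` restricted to the vertex set `S`. -/
def IsSplit (G : SimpleGraph V) (S A : Finset V) : Prop :=
  A ⊆ S ∧ cutRank G S A ≤ 1 ∧ 2 ≤ A.card ∧ 2 ≤ (S \ A).card

/-- The graph `G` restricted to the vertex set `S` is prime: connected and with no split. -/
def IsPrime (G : SimpleGraph V) (S : Finset V) : Prop :=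
  (G.induce (↑S : Set V)).Connected ∧ ∀ A, ¬ IsSplit G S A

/-- `G` restricted to `S` is `k⁺ˡ`-rank-connected. -/
def RankConn (G : SimpleGraph V) (S : Finset V) (k l : ℤ) : Prop :=
  ∀ X ⊆ S, (cutRank G S X : ℤ) < k →
    min (X.card : ℤ) (((S \ X).card : ℤ)) < k + l

/-- `G` restricted to `S` is `k`-rank-connected. -/
def RankConnAll (G : SimpleGraph V) (S : Finset V) (k : ℤ) : Prop :=
  ∀ m : ℤ, m ≤ k → RankConn G S m 0

def SideA (G : SimpleGraph V) (v w x : V) : Prop := G.Adj v x ∧ ¬ G.Adj w x ∧ x ≠ w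
def SideB (G : SimpleGraph V) (v w x : V) : Prop := G.Adj w x ∧ ¬ G.Adj v x ∧ x ≠ v
def SideC (G : SimpleGraph V) (v w x : V) : Prop := G.Adj v x ∧ G.Adj w x

/-- `x` and `y` lie in different ones among the three sets
`N(v)−N(w)−{w}`, `N(w)−N(v)−{v}`, `N(v)∩N(w)`. -/
def PivotToggle (G : SimpleGraph V) (v w x y : V) : Prop :=
  (SideA G v w x ∧ SideB G v w y) ∨ (SideB G v w x ∧ SideA G v w y) ∨
  (SideA G v w x ∧ SideC G v w y) ∨ (SideC G v w x ∧ SideA G v w y) ∨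
  (SideB G v w x ∧ SideC G v w y) ∨ (SideC G v w x ∧ SideB G v w y)

set_option linter.unusedSectionVars false in
lemma pivotToggle_symm {G : SimpleGraph V} {v w x y : V}
    (h : PivotToggle G v w x y) : PivotToggle G v w y x := by
  unfold PivotToggle at h ⊢; tauto

/-- The graph `G ∧ vw` obtained by pivoting the edge `vw`: toggle adjacency across the
three sets and swap the labels of `v` and `w`. -/
def pivot (G : SimpleGraph V) (v w : V) : SimpleGraph V where
  Adj a b := a ≠ b ∧
    Xor' (G.Adj (Equiv.swap v w a) (Equiv.swap v w b))
         (PivotToggle G v w (Equiv.swap v w a) (Equiv.swap v w b))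
  symm := by
    constructor
    intro a b h
    obtain ⟨hne, hx⟩ := h
    refine ⟨hne.symm, ?_⟩
    have hA : G.Adj (Equiv.swap v w b) (Equiv.swap v w a) ↔
        G.Adj (Equiv.swap v w a) (Equiv.swap v w b) := SimpleGraph.adj_comm _ _ _
    have hT : PivotToggle G v w (Equiv.swap v w b) (Equiv.swap v w a) ↔
        PivotToggle G v w (Equiv.swap v w a) (Equiv.swap v w b) :=
      ⟨pivotToggle_symm, pivotToggle_symm⟩
    rw [hA, hT]
    exact hx
  loopless := by constructor; intro a h; exact h.1 rfl

/-- One pivot step along an edge. -/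
def PivotStep (G H : SimpleGraph V) : Prop := ∃ v w, G.Adj v w ∧ H = pivot G v w

/-- Pivot-equivalence: a sequence of pivots. -/
def PivotEquiv : SimpleGraph V → SimpleGraph V → Prop := Relation.ReflTransGen PivotStep

/-- `A` is a fully closed set of `G` restricted to `S`. -/
def FullyClosed (G : SimpleGraph V) (S A : Finset V) : Prop :=
  A ⊆ S ∧ cutRank G S A = 2 ∧ 2 < A.card ∧
    ∀ u ∈ S, u ∉ A → cutRank G S A < cutRank G S (insert u A)

/-- `{a,b,c}` is a triplet of `G` (on vertex set `univ`). -/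
def Triplet (G : SimpleGraph V) (a b c : V) : Prop :=
  cutRank G Finset.univ {a, b, c} = 2 ∧
  ∀ x ∈ ({a, b, c} : Finset V),
    cutRank G (Finset.univ \ {x}) (({a, b, c} : Finset V) \ {x}) = 2

/-- `B` is a `k`-branched set of `G` restricted to `S`. -/
inductive KBranched (G : SimpleGraph V) (S : Finset V) (k : ℕ) : Finset V → Prop
  | single (v : V) (hv : v ∈ S) (h : cutRank G S {v} ≤ k) : KBranched G S k {v}
  | split (B B' : Finset V) (hB : B ⊆ S) (h : cutRank G S B ≤ k)
      (h1 : B' ⊆ B) (h2 : B'.Nonempty) (h3 : B' ≠ B)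
      (hb1 : KBranched G S k B') (hb2 : KBranched G S k (B \ B')) : KBranched G S k B

/-- The rank-width of `G` restricted to `S`: the least `k` such that `S` is `k`-branched
(equivalently, the minimum width of a rank-decomposition). -/
noncomputable def rankWidth (G : SimpleGraph V) (S : Finset V) : ℕ :=
  sInf {k | S = ∅ ∨ KBranched G S k S}

/-- `A` is a titanic set of `G` restricted to `S`. -/
def Titanic (G : SimpleGraph V) (S A : Finset V) : Prop :=
  ∀ A1 A2 A3 : Finset V, A1 ∪ A2 ∪ A3 = A →
    Disjoint A1 A2 → Disjoint A1 A3 → Disjoint A2 A3 →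
    cutRank G S A ≤ cutRank G S A1 ∨ cutRank G S A ≤ cutRank G S A2 ∨
      cutRank G S A ≤ cutRank G S A3

/-!
Both `G∖v` and `G/v = (G ∧ vw)∖v` lose at most one from every cut-rank of `G`: for
`X ⊆ V - v`, `ρ_G(X)` and `ρ_G(X + v)` are at most `ρ_H(X) + 1` for either minor `H`. Since `G`
is 3-rank-connected with at least six vertices, this alone makes both minors 2-rank-connected,
hence prime.

For `3⁺²`-rank-connectivity, bimodularity of the ranks of submatrices gives
`ρ_G(X ∩ Y) + ρ_G(X ∪ Y + v) ≤ ρ_{G∖v}(X) + ρ_{G/v}(Y) + 1`. If `X` and `Y` had cut-rank at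
most two in `G∖v` and `G/v` with all four sides of size at least five, this inequality for
`(X, Y)` and for `(X, V - v - Y)`, together with 3-rank-connectivity of `G`, would leave at most
two vertices in a quadrant of each diagonal of the Venn diagram of `X` and `Y`; two such quadrants
make up one of the four sides, which would then have at most four vertices.
-/

set_option linter.unusedSectionVars false

open Matrix Module SimpleGraph

section BlockRange

variable {m n K : Type*} [Field K]

noncomputable def blockRange (M : Matrix m n K) (A : Finset m) (C : Finset n) :
    Submodule K (A → K) :=
  LinearMap.range (M.submatrix ((↑) : A → m) ((↑) : C → n)).mulVecLin

def restrictRows {A A' : Finset m} (h : A ⊆ A') : (A' → K) →ₗ[K] A → K :=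
  LinearMap.funLeft K K fun i => ⟨i, h i.2⟩

noncomputable def extendRows {A A' : Finset m} (h : A ⊆ A') : (A → K) →ₗ[K] A' → K :=
  Function.ExtendByZero.linearMap K fun i : A => (⟨i, h i.2⟩ : A')

theorem extendRows_apply {A A' : Finset m} (h : A ⊆ A') (f : A → K) (i : A') :
    extendRows h f i = if hi : (i : m) ∈ A then f ⟨i, hi⟩ else 0 := by
  have hinj : Function.Injective fun j : A => (⟨j, h j.2⟩ : A') :=
    fun j k hjk => Subtype.ext (Subtype.ext_iff.1 hjk :)
  split_ifs with hi
  · exact hinj.extend_apply f 0 ⟨i, hi⟩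
  · exact Function.extend_apply' _ _ _ fun ⟨j, hj⟩ => hi (Subtype.ext_iff.1 hj ▸ j.2)

theorem Matrix.rank_le_rank_add_one_of_col_eq {m' n' : Type*} [Fintype n] [Fintype m']
    [Fintype n'] (M : Matrix m n K) (N : Matrix m' n' K) (e : (m → K) →ₗ[K] m' → K)
    (z : m' → K) (h : ∀ j, ∃ (x : n → K) (t : K), N.col j = e (M *ᵥ x) + t • z) :
    N.rank ≤ M.rank + 1 := by
  have hspan : Submodule.span K (Set.range N.col) ≤
      (LinearMap.range M.mulVecLin).map e ⊔ K ∙ z := by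
    refine Submodule.span_le.2 ?_
    rintro _ ⟨j, rfl⟩
    obtain ⟨x, t, hx⟩ := h j
    rw [SetLike.mem_coe, hx]
    exact add_mem (Submodule.mem_sup_left ⟨_, ⟨x, rfl⟩, rfl⟩)
      (Submodule.mem_sup_right (Submodule.smul_mem _ t (Submodule.mem_span_singleton_self z)))
  calc N.rank ≤ finrank K ↥((LinearMap.range M.mulVecLin).map e ⊔ K ∙ z) := by
        rw [rank_eq_finrank_span_cols]; exact Submodule.finrank_mono hspan
    _ ≤ finrank K ↥((LinearMap.range M.mulVecLin).map e) + finrank K ↥(K ∙ z) :=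
        Submodule.finrank_add_le_finrank_add_finrank _ _
    _ ≤ M.rank + 1 := by
        gcongr
        · exact Submodule.finrank_map_le _ _
        · simpa using finrank_span_le_card (R := K) ({z} : Set (m' → K))

theorem finrank_add_finrank_le_of_le_range_of_injective {E F Q : Type*} [AddCommGroup E]
    [Module K E] [FiniteDimensional K E] [AddCommGroup F] [Module K F] [AddCommGroup Q]
    [Module K Q] (φ : E →ₗ[K] F) {P : Submodule K F} (hP : P ≤ LinearMap.range φ)
    {ψ : Q →ₗ[K] E} (hψ : Function.Injective ψ)
    (hψφ : LinearMap.range ψ ≤ LinearMap.ker φ) :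
    finrank K P + finrank K Q ≤ finrank K E := by
  rw [← LinearMap.finrank_range_add_finrank_ker φ, ← LinearMap.finrank_range_of_inj hψ]
  exact add_le_add (Submodule.finrank_mono hP) (Submodule.finrank_mono hψφ)

variable (M : Matrix m n K)

theorem blockRange_eq_span (A : Finset m) (C : Finset n) :
    blockRange M A C = Submodule.span K (Set.range fun (j : C) (i : A) => M i j) :=
  range_mulVecLin _

theorem blockRange_eq_bot {A : Finset m} {C : Finset n} (h : ∀ i ∈ A, ∀ j ∈ C, M i j = 0) :
    blockRange M A C = ⊥ := by
  have hzero : M.submatrix ((↑) : A → m) ((↑) : C → n) = 0 := by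
    ext i j
    exact h i i.2 j j.2
  rw [blockRange, hzero, mulVecLin_zero, LinearMap.range_zero]

theorem blockRange_mono_right (A : Finset m) {C C' : Finset n} (h : C ⊆ C') :
    blockRange M A C ≤ blockRange M A C' := by
  rw [blockRange_eq_span, blockRange_eq_span]
  exact Submodule.span_mono fun _ ⟨j, hj⟩ => ⟨⟨j, h j.2⟩, hj⟩

theorem blockRange_union_right_le [DecidableEq n] (A : Finset m) (C₁ C₂ : Finset n) :
    blockRange M A (C₁ ∪ C₂) ≤ blockRange M A C₁ ⊔ blockRange M A C₂ := by
  simp only [blockRange_eq_span, ← Submodule.span_union, Submodule.span_le]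
  rintro _ ⟨⟨j, hj⟩, rfl⟩
  rcases Finset.mem_union.1 hj with h | h
  · exact Submodule.subset_span (Or.inl ⟨⟨j, h⟩, rfl⟩)
  · exact Submodule.subset_span (Or.inr ⟨⟨j, h⟩, rfl⟩)

theorem map_restrictRows_blockRange {A A' : Finset m} (h : A ⊆ A') (C : Finset n) :
    (blockRange M A' C).map (restrictRows h) = blockRange M A C := by
  rw [blockRange, blockRange, ← LinearMap.range_comp]
  rfl

theorem finrank_blockRange_mono {A A' : Finset m} {C C' : Finset n} (hA : A ⊆ A')
    (hC : C ⊆ C') : finrank K (blockRange M A C) ≤ finrank K (blockRange M A' C') := by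
  rw [← map_restrictRows_blockRange M hA]
  exact (Submodule.finrank_map_le _ _).trans
    (Submodule.finrank_mono (blockRange_mono_right M A' hC))

theorem finrank_blockRange_transpose (A : Finset m) (C : Finset n) :
    finrank K (blockRange Mᵀ C A) = finrank K (blockRange M A C) :=
  rank_transpose (M.submatrix ((↑) : A → m) ((↑) : C → n))

theorem finrank_blockRange_insert_right_le [DecidableEq n] (A : Finset m) (C : Finset n) (c : n) :
    finrank K (blockRange M A (insert c C)) ≤ finrank K (blockRange M A C) + 1 := by
  rw [Finset.insert_eq, add_comm]
  calc finrank K (blockRange M A ({c} ∪ C))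
      ≤ finrank K ↥(blockRange M A {c} ⊔ blockRange M A C) :=
        Submodule.finrank_mono (blockRange_union_right_le M A _ _)
    _ ≤ finrank K (blockRange M A {c}) + finrank K (blockRange M A C) :=
        Submodule.finrank_add_le_finrank_add_finrank _ _
    _ ≤ 1 + finrank K (blockRange M A C) := by
        gcongr
        exact (rank_le_card_width _).trans_eq (by simp)

theorem finrank_blockRange_insert_left_le [DecidableEq m] (A : Finset m) (C : Finset n) (a : m) :
    finrank K (blockRange M (insert a A) C) ≤ finrank K (blockRange M A C) + 1 := by
  rw [← finrank_blockRange_transpose M, ← finrank_blockRange_transpose M]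
  exact finrank_blockRange_insert_right_le _ _ _ _

theorem finrank_blockRange_inter_add_union_le [DecidableEq m] [DecidableEq n]
    (A₁ A₂ : Finset m) (C₁ C₂ : Finset n) :
    finrank K (blockRange M (A₁ ∩ A₂) (C₁ ∪ C₂)) +
        finrank K (blockRange M (A₁ ∪ A₂) (C₁ ∩ C₂)) ≤
      finrank K (blockRange M A₁ C₁) + finrank K (blockRange M A₂ C₂) := by
  set N₁ := blockRange M A₁ C₁
  set N₂ := blockRange M A₂ C₂
  set U := blockRange M (A₁ ∪ A₂) (C₁ ∩ C₂)
  let r₁ := restrictRows (K := K) (Finset.inter_subset_left : A₁ ∩ A₂ ⊆ A₁)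
  let r₂ := restrictRows (K := K) (Finset.inter_subset_right : A₁ ∩ A₂ ⊆ A₂)
  let s₁ := restrictRows (K := K) (Finset.subset_union_left : A₁ ⊆ A₁ ∪ A₂)
  let s₂ := restrictRows (K := K) (Finset.subset_union_right : A₂ ⊆ A₁ ∪ A₂)
  -- `φ` compares the restrictions to `A₁ ∩ A₂` of the two components; its range contains the
  -- `(A₁ ∩ A₂) × (C₁ ∪ C₂)` block, and `ψ` embeds the `(A₁ ∪ A₂) × (C₁ ∩ C₂)` block in its
  -- kernel.
  let φ : (N₁ × N₂) →ₗ[K] (↥(A₁ ∩ A₂) → K) :=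
    (r₁ ∘ₗ N₁.subtype).coprod (-(r₂ ∘ₗ N₂.subtype))
  have hs₁ : U.map s₁ ≤ N₁ := (map_restrictRows_blockRange M _ _).trans_le
    (blockRange_mono_right M _ Finset.inter_subset_left)
  have hs₂ : U.map s₂ ≤ N₂ := (map_restrictRows_blockRange M _ _).trans_le
    (blockRange_mono_right M _ Finset.inter_subset_right)
  let ψ : U →ₗ[K] N₁ × N₂ :=
    (LinearMap.codRestrict N₁ (s₁ ∘ₗ U.subtype) fun u => hs₁ ⟨u, u.2, rfl⟩).prod
      (LinearMap.codRestrict N₂ (s₂ ∘ₗ U.subtype) fun u => hs₂ ⟨u, u.2, rfl⟩)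
  have hψ : Function.Injective ψ := by
    intro u u' h
    ext ⟨i, hi⟩
    rcases Finset.mem_union.1 hi with hi | hi
    · exact congr_fun (congr_arg (fun p => (p.1 : A₁ → K)) h) ⟨i, hi⟩
    · exact congr_fun (congr_arg (fun p => (p.2 : A₂ → K)) h) ⟨i, hi⟩
  have h_range : blockRange M (A₁ ∩ A₂) (C₁ ∪ C₂) ≤ LinearMap.range φ := by
    refine (blockRange_union_right_le M _ _ _).trans (sup_le ?_ ?_)
    · rw [← map_restrictRows_blockRange M Finset.inter_subset_left]
      rintro _ ⟨x, hx, rfl⟩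
      exact ⟨(⟨x, hx⟩, 0), by simp [φ, r₁]⟩
    · rw [← map_restrictRows_blockRange M Finset.inter_subset_right]
      rintro _ ⟨x, hx, rfl⟩
      exact ⟨(0, ⟨-x, N₂.neg_mem hx⟩), by simp [φ, r₂]⟩
  have h_ker : LinearMap.range ψ ≤ LinearMap.ker φ := by
    rintro _ ⟨u, rfl⟩
    ext i
    simp [φ, ψ, r₁, r₂, s₁, s₂, restrictRows, LinearMap.funLeft]
  exact (finrank_add_finrank_le_of_le_range_of_injective φ h_range hψ h_ker).trans_eq
    Module.finrank_prod

end BlockRange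

section CutRank

variable {G Γ : SimpleGraph V} {v w : V}

theorem cutRank_eq_finrank (G : SimpleGraph V) (S X : Finset V) :
    cutRank G S X = finrank (ZMod 2) (blockRange (G.adjMatrix (ZMod 2)) X (S \ X)) :=
  rfl

theorem finrank_blockRange_adjMatrix_comm (G : SimpleGraph V) (A C : Finset V) :
    finrank (ZMod 2) (blockRange (G.adjMatrix (ZMod 2)) C A) =
      finrank (ZMod 2) (blockRange (G.adjMatrix (ZMod 2)) A C) := by
  rw [← finrank_blockRange_transpose, transpose_adjMatrix]

theorem cutRank_sdiff {S X : Finset V} (hX : X ⊆ S) : cutRank G S (S \ X) = cutRank G S X := by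
  rw [cutRank_eq_finrank, cutRank_eq_finrank, Finset.sdiff_sdiff_eq_self hX,
    finrank_blockRange_adjMatrix_comm]

theorem cutRank_eq_zero_of_forall_not_adj {S X : Finset V}
    (h : ∀ x ∈ X, ∀ y ∈ S \ X, ¬G.Adj x y) : cutRank G S X = 0 := by
  rw [cutRank_eq_finrank, blockRange_eq_bot _ fun x hx y hy => by simp [h x hx y hy], finrank_bot]

theorem RankConn.le_cutRank {S X : Finset V} {k : ℤ} (h : RankConn G S k 0) (hX : X ⊆ S)
    (h₁ : k ≤ X.card) (h₂ : k ≤ (S \ X).card) : k ≤ cutRank G S X := by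
  by_contra! hlt
  have := h X hX hlt
  omega

theorem exists_adj_of_rankConn (hG : RankConn G Finset.univ 1 0) (hcard : 2 ≤ Fintype.card V)
    (v : V) : ∃ w, G.Adj v w := by
  by_contra! h
  have hv := hG.le_cutRank (Finset.subset_univ {v}) (by simp) (by
    rw [Finset.card_sdiff_of_subset (Finset.subset_univ _), Finset.card_univ,
      Finset.card_singleton]
    omega)
  rw [cutRank_eq_zero_of_forall_not_adj (by simp [h])] at hv
  omega

theorem notMem_of_subset_univ_sdiff {A : Finset V} (hA : A ⊆ Finset.univ \ {v}) : v ∉ A :=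
  fun h => (Finset.mem_sdiff.1 (hA h)).2 (Finset.mem_singleton_self v)

theorem compl_eq_insert_sdiff {A : Finset V} (hA : A ⊆ Finset.univ \ {v}) :
    Finset.univ \ A = insert v ((Finset.univ \ {v}) \ A) := by
  ext x
  by_cases hx : x = v
  · simpa [hx] using notMem_of_subset_univ_sdiff hA
  · simp [hx]

theorem compl_insert_eq_sdiff (v : V) (A : Finset V) :
    Finset.univ \ insert v A = (Finset.univ \ {v}) \ A := by
  ext x
  simp [not_or]

def CutRankLossLeOne (G Γ : SimpleGraph V) (v : V) : Prop :=
  ∀ A ⊆ Finset.univ \ {v}, cutRank G Finset.univ A ≤ cutRank Γ (Finset.univ \ {v}) A + 1 ∧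
    cutRank G Finset.univ (insert v A) ≤ cutRank Γ (Finset.univ \ {v}) A + 1

theorem cutRankLossLeOne_self (G : SimpleGraph V) (v : V) : CutRankLossLeOne G G v := by
  refine fun A hA => ⟨?_, ?_⟩
  · rw [cutRank_eq_finrank, compl_eq_insert_sdiff hA]
    exact finrank_blockRange_insert_right_le _ _ _ _
  · rw [cutRank_eq_finrank, compl_insert_eq_sdiff]
    exact finrank_blockRange_insert_left_le _ _ _ _

theorem rankConn_of_cutRankLossLeOne (hΓ : CutRankLossLeOne G Γ v) {m : ℤ}
    (hG : RankConn G Finset.univ (m + 1) 0) (hcard : 2 * m + 2 ≤ Fintype.card V) :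
    RankConn Γ (Finset.univ \ {v}) m 0 := by
  intro A hA hAr
  by_contra! hbig
  obtain ⟨h₁, h₂⟩ := hΓ A hA
  have hvA := notMem_of_subset_univ_sdiff hA
  have hA₁ := hG A (Finset.subset_univ _) (by omega)
  have hA₂ := hG (insert v A) (Finset.subset_univ _) (by omega)
  rw [compl_eq_insert_sdiff hA, Finset.card_insert_of_notMem (by simp)] at hA₁
  rw [compl_insert_eq_sdiff, Finset.card_insert_of_notMem hvA] at hA₂
  have hS := Finset.card_sdiff_add_card_eq_card hA
  rw [Finset.card_sdiff_of_subset (Finset.subset_univ _), Finset.card_univ,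
    Finset.card_singleton] at hS
  omega

theorem rankConnAll_of_cutRankLossLeOne (hΓ : CutRankLossLeOne G Γ v) {k : ℤ}
    (hG : RankConnAll G Finset.univ (k + 1)) (hcard : 2 * k + 2 ≤ Fintype.card V) :
    RankConnAll Γ (Finset.univ \ {v}) k :=
  fun m hm => rankConn_of_cutRankLossLeOne hΓ (hG (m + 1) (by omega)) (by omega)

theorem connected_induce_of_rankConn {S : Finset V} (hS : S.Nonempty) (h : RankConn Γ S 1 0) :
    (Γ.induce (S : Set V)).Connected := by
  obtain ⟨a, ha⟩ := hS
  let P := S.filter fun u => ∃ hu : u ∈ (S : Set V),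
    (Γ.induce (S : Set V)).Reachable ⟨a, ha⟩ ⟨u, hu⟩
  have hP : cutRank Γ S P = 0 := by
    refine cutRank_eq_zero_of_forall_not_adj fun x hx y hy hxy => (Finset.mem_sdiff.1 hy).2 ?_
    obtain ⟨hxS, hax⟩ := (Finset.mem_filter.1 hx).2
    have hyS : y ∈ (S : Set V) := (Finset.mem_sdiff.1 hy).1
    exact Finset.mem_filter.2 ⟨hyS, hyS, hax.trans (Adj.reachable (by simpa using hxy))⟩
  have hPS := h P (Finset.filter_subset _ _) (by simp [hP])
  have haP : a ∈ P := Finset.mem_filter.2 ⟨ha, ha, Reachable.refl _⟩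
  have hall : S \ P = ∅ := by
    by_contra hne
    have := Finset.card_pos.2 (Finset.nonempty_iff_ne_empty.2 hne)
    have := Finset.card_pos.2 ⟨a, haP⟩
    omega
  have hreach (u : (S : Set V)) : (Γ.induce (S : Set V)).Reachable ⟨a, ha⟩ u :=
    (Finset.mem_filter.1 (Finset.sdiff_eq_empty_iff_subset.1 hall u.2)).2.2
  have : Nonempty (S : Set V) := ⟨⟨a, ha⟩⟩
  exact ⟨fun x y => (hreach x).symm.trans (hreach y)⟩

theorem isPrime_of_rankConnAll {S : Finset V} (hS : S.Nonempty) (h : RankConnAll Γ S 2) :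
    IsPrime Γ S := by
  refine ⟨connected_induce_of_rankConn hS (h 1 (by norm_num)), fun A ⟨hA, hAr, h₁, h₂⟩ => ?_⟩
  have := h 2 le_rfl A hA (by omega)
  omega

theorem isPrime_of_cutRankLossLeOne (hG : RankConnAll G Finset.univ 3)
    (hcard : 6 ≤ Fintype.card V) (hΓ : CutRankLossLeOne G Γ v) :
    IsPrime Γ (Finset.univ \ {v}) := by
  refine isPrime_of_rankConnAll ?_ (rankConnAll_of_cutRankLossLeOne hΓ (k := 2) hG (by omega))
  rw [← Finset.card_pos, Finset.card_sdiff_of_subset (Finset.subset_univ _), Finset.card_univ,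
    Finset.card_singleton]
  omega

end CutRank

section Pivot

variable {G : SimpleGraph V} {v w : V}

theorem pivot_adj {x y : V} : (pivot G v w).Adj x y ↔ x ≠ y ∧
    ¬(G.Adj (Equiv.swap v w x) (Equiv.swap v w y) ↔
      PivotToggle G v w (Equiv.swap v w x) (Equiv.swap v w y)) :=
  and_congr_right fun _ => xor_iff_not_iff _ _

theorem adjMatrix_pivot_apply {x y : V} (hxv : x ≠ v) (hxw : x ≠ w) (hyv : y ≠ v)
    (hyw : y ≠ w) :
    (pivot G v w).adjMatrix (ZMod 2) x y = G.adjMatrix (ZMod 2) x y +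
      G.adjMatrix (ZMod 2) x v * G.adjMatrix (ZMod 2) w y +
      G.adjMatrix (ZMod 2) x w * G.adjMatrix (ZMod 2) v y := by
  simp only [adjMatrix_apply, pivot_adj, Equiv.swap_apply_of_ne_of_ne hxv hxw,
    Equiv.swap_apply_of_ne_of_ne hyv hyw, PivotToggle, SideA, SideB, SideC, G.adj_comm x v,
    G.adj_comm x w, ne_eq, hxv, hxw, hyv, hyw, not_false_eq_true, and_true]
  by_cases hxy : x = y
  · subst hxy
    by_cases G.Adj v x <;> by_cases G.Adj w x <;> simp_all [CharTwo.add_self_eq_zero]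
  · by_cases G.Adj x y <;> by_cases G.Adj v x <;> by_cases G.Adj w x <;>
      by_cases G.Adj v y <;> by_cases G.Adj w y <;> simp_all [CharTwo.add_self_eq_zero]

theorem adjMatrix_pivot_apply_right {x : V} (hxv : x ≠ v) (hxw : x ≠ w) :
    (pivot G v w).adjMatrix (ZMod 2) x w = G.adjMatrix (ZMod 2) x v := by
  simp [adjMatrix_apply, pivot_adj, Equiv.swap_apply_of_ne_of_ne hxv hxw, hxw, PivotToggle,
    SideA, SideB, SideC]

theorem finrank_blockRange_insert_le_pivot (hvw : G.Adj v w) {A C : Finset V} (hvA : v ∉ A)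
    (hwA : w ∉ A) (hwC : w ∈ C) :
    finrank (ZMod 2) (blockRange (G.adjMatrix (ZMod 2)) (insert v A) (insert v C)) ≤
      finrank (ZMod 2) (blockRange ((pivot G v w).adjMatrix (ZMod 2)) A C) + 1 := by
  have hA : ∀ i ∈ A, i ≠ v ∧ i ≠ w := fun i hi =>
    ⟨ne_of_mem_of_not_mem hi hvA, ne_of_mem_of_not_mem hi hwA⟩
  -- Column `v` is column `w` of the pivot extended by `0`; by the pivot formula every other
  -- column is such a combination of pivot columns plus a multiple of column `w` of `G`, whose
  -- entry in row `v` is `1`.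
  refine rank_le_rank_add_one_of_col_eq _ _ (extendRows (Finset.subset_insert v A))
    (fun i => G.adjMatrix (ZMod 2) i w) fun ⟨y, hy⟩ => ?_
  by_cases hyv : y = v
  · refine ⟨Pi.single ⟨w, hwC⟩ 1, 0, funext fun ⟨i, hi⟩ => ?_⟩
    simp only [Pi.add_apply, extendRows_apply, mulVec_single_one, zero_smul, col_apply,
      submatrix_apply]
    split_ifs with hiA
    · rw [hyv, adjMatrix_pivot_apply_right (hA i hiA).1 (hA i hiA).2, Pi.zero_apply, add_zero]
    · simp [hyv, (Finset.mem_insert.1 hi).resolve_right hiA]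
  by_cases hyw : y = w
  · exact ⟨0, 1, funext fun ⟨i, hi⟩ => by simp [hyw]⟩
  have hyC : y ∈ C := (Finset.mem_insert.1 hy).resolve_left hyv
  refine ⟨Pi.single ⟨y, hyC⟩ 1 + G.adjMatrix (ZMod 2) w y • Pi.single ⟨w, hwC⟩ 1,
    G.adjMatrix (ZMod 2) v y, funext fun ⟨i, hi⟩ => ?_⟩
  simp only [Pi.add_apply, extendRows_apply, mulVec_add, mulVec_smul, mulVec_single_one,
    Pi.smul_apply, smul_eq_mul, col_apply, submatrix_apply]
  split_ifs with hiA
  · rw [adjMatrix_pivot_apply (hA i hiA).1 (hA i hiA).2 hyv hyw,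
      adjMatrix_pivot_apply_right (hA i hiA).1 (hA i hiA).2]
    ring_nf
    reduce_mod_char
  · simp [(Finset.mem_insert.1 hi).resolve_right hiA, hvw]

theorem finrank_blockRange_insert_sdiff_le_cutRank_pivot (hvw : G.Adj v w) {A : Finset V}
    (hA : A ⊆ Finset.univ \ {v}) :
    finrank (ZMod 2)
        (blockRange (G.adjMatrix (ZMod 2)) (insert v A) (insert v ((Finset.univ \ {v}) \ A))) ≤
      cutRank (pivot G v w) (Finset.univ \ {v}) A + 1 := by
  have hvA := notMem_of_subset_univ_sdiff hA
  have hwv : w ≠ v := hvw.ne.symm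
  by_cases hwA : w ∈ A
  · rw [finrank_blockRange_adjMatrix_comm, ← cutRank_sdiff hA, cutRank_eq_finrank,
      Finset.sdiff_sdiff_eq_self hA]
    exact finrank_blockRange_insert_le_pivot hvw (by simp) (by simp [hwA]) hwA
  · exact finrank_blockRange_insert_le_pivot hvw hvA hwA (by simp [hwv, hwA])

theorem cutRankLossLeOne_pivot (hvw : G.Adj v w) : CutRankLossLeOne G (pivot G v w) v := by
  refine fun A hA => ⟨le_trans ?_ (finrank_blockRange_insert_sdiff_le_cutRank_pivot hvw hA),
    le_trans ?_ (finrank_blockRange_insert_sdiff_le_cutRank_pivot hvw hA)⟩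
  · rw [cutRank_eq_finrank, compl_eq_insert_sdiff hA]
    exact finrank_blockRange_mono _ (Finset.subset_insert v A) subset_rfl
  · rw [cutRank_eq_finrank, compl_insert_eq_sdiff]
    exact finrank_blockRange_mono _ subset_rfl (Finset.subset_insert v _)

end Pivot

section Main

variable {G : SimpleGraph V} {v w : V}

theorem cutRank_inter_add_cutRank_insert_union_le (hvw : G.Adj v w) {X B : Finset V}
    (hX : X ⊆ Finset.univ \ {v}) (hB : B ⊆ Finset.univ \ {v}) :
    cutRank G Finset.univ (X ∩ B) + cutRank G Finset.univ (insert v (X ∪ B)) ≤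
      cutRank G (Finset.univ \ {v}) X + cutRank (pivot G v w) (Finset.univ \ {v}) B + 1 := by
  have hpiv := finrank_blockRange_insert_sdiff_le_cutRank_pivot hvw hB
  set S := Finset.univ \ {v}
  have hvX := notMem_of_subset_univ_sdiff hX
  have hvB := notMem_of_subset_univ_sdiff hB
  have h := finrank_blockRange_inter_add_union_le (G.adjMatrix (ZMod 2)) X (insert v B) (S \ X)
    (insert v (S \ B))
  have e₁ : X ∩ insert v B = X ∩ B := by
    rw [Finset.inter_insert_of_notMem hvX]
  have e₂ : S \ X ∪ insert v (S \ B) = Finset.univ \ (X ∩ B) := by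
    ext x; by_cases hx : x = v <;> simp [S, hx, hvX]
    tauto
  have e₃ : X ∪ insert v B = insert v (X ∪ B) := Finset.union_insert v X B
  have e₄ : S \ X ∩ insert v (S \ B) = Finset.univ \ insert v (X ∪ B) := by
    ext x; by_cases hx : x = v <;> simp [S, hx, hvX, hvB]
  rw [e₁, e₂, e₃, e₄] at h
  rw [cutRank_eq_finrank G _ (X ∩ B), cutRank_eq_finrank G _ (insert v (X ∪ B)),
    cutRank_eq_finrank G _ X]
  omega

theorem card_inter_le_two_or_card_sdiff_union_le_two (hG : RankConnAll G Finset.univ 3)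
    (hvw : G.Adj v w) {X B : Finset V} (hX : X ⊆ Finset.univ \ {v}) (hB : B ⊆ Finset.univ \ {v})
    (hXr : cutRank G (Finset.univ \ {v}) X ≤ 2)
    (hBr : cutRank (pivot G v w) (Finset.univ \ {v}) B ≤ 2)
    (hX₃ : 3 ≤ X.card) (hSX₃ : 3 ≤ ((Finset.univ \ {v}) \ X).card) :
    (X ∩ B).card ≤ 2 ∨ ((Finset.univ \ {v}) \ (X ∪ B)).card ≤ 2 := by
  have hsum := cutRank_inter_add_cutRank_insert_union_le hvw hX hB
  by_contra! hbig
  have h₁ := (hG 3 le_rfl).le_cutRank (Finset.subset_univ (X ∩ B)) (by omega) (by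
    have : (Finset.univ \ {v}) \ X ⊆ Finset.univ \ (X ∩ B) := by
      intro x; simp +contextual
    have := Finset.card_le_card this
    omega)
  have h₂ := (hG 3 le_rfl).le_cutRank (Finset.subset_univ (insert v (X ∪ B))) (by
    have := Finset.card_le_card (Finset.subset_union_left.trans (Finset.subset_insert v (X ∪ B)))
    omega) (by rw [compl_insert_eq_sdiff]; omega)
  omega

theorem rankConn_or_rankConn_pivot (hG : RankConnAll G Finset.univ 3) (hvw : G.Adj v w) :
    RankConn G (Finset.univ \ {v}) 3 2 ∨ RankConn (pivot G v w) (Finset.univ \ {v}) 3 2 := by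
  rw [or_iff_not_imp_left]
  intro hX B hB hBr
  simp only [RankConn, not_forall] at hX
  obtain ⟨X, hX, hXr, hXbig⟩ := hX
  by_contra! hBbig
  have hBr' := cutRank_sdiff (G := pivot G v w) hB
  have alt₁ := card_inter_le_two_or_card_sdiff_union_le_two hG hvw hX hB (by omega) (by omega)
    (by omega) (by omega)
  have alt₂ := card_inter_le_two_or_card_sdiff_union_le_two hG hvw hX Finset.sdiff_subset
    (by omega) (B := (Finset.univ \ {v}) \ B) (by omega) (by omega) (by omega)
  have hvX := notMem_of_subset_univ_sdiff hX
  have hvB := notMem_of_subset_univ_sdiff hB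
  have e₁ : X ∩ ((Finset.univ \ {v}) \ B) = X \ B := by
    ext x; by_cases hx : x = v <;> simp [hx, hvX]
  have e₂ : (Finset.univ \ {v}) \ (X ∪ ((Finset.univ \ {v}) \ B)) = B \ X := by
    ext x; by_cases hx : x = v <;> simp [hx, hvB]; tauto
  have e₃ : ((Finset.univ \ {v}) \ B) \ X = (Finset.univ \ {v}) \ (X ∪ B) := by
    ext x; simp; tauto
  have e₄ : ((Finset.univ \ {v}) \ X) ∩ B = B \ X := by
    ext x; by_cases hx : x = v <;> simp [hx, hvB]; tauto
  have e₅ : ((Finset.univ \ {v}) \ X) \ B = (Finset.univ \ {v}) \ (X ∪ B) := by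
    ext x; simp; tauto
  rw [e₁, e₂] at alt₂
  have cX := Finset.card_inter_add_card_sdiff X B
  have cB := Finset.card_inter_add_card_sdiff B X
  have cSB := Finset.card_inter_add_card_sdiff ((Finset.univ \ {v}) \ B) X
  have cSX := Finset.card_inter_add_card_sdiff ((Finset.univ \ {v}) \ X) B
  rw [Finset.inter_comm, e₁, e₃] at cSB
  rw [Finset.inter_comm] at cB
  rw [e₄, e₅] at cSX
  omega

end Main

theorem threeRankConn_prime_minor {G : SimpleGraph V} (hG : RankConnAll G Finset.univ 3)
    (hcard : 6 ≤ Fintype.card V) (v : V) :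
    (IsPrime G (Finset.univ \ {v}) ∧ RankConn G (Finset.univ \ {v}) 3 2) ∨
      ∃ w, G.Adj v w ∧ IsPrime (pivot G v w) (Finset.univ \ {v}) ∧
        RankConn (pivot G v w) (Finset.univ \ {v}) 3 2 := by
  obtain ⟨w, hvw⟩ := exists_adj_of_rankConn (hG 1 (by norm_num)) (by omega) v
  rcases rankConn_or_rankConn_pivot hG hvw with h | h
  · exact Or.inl ⟨isPrime_of_cutRankLossLeOne hG hcard (cutRankLossLeOne_self G v), h⟩
  · exact Or.inr ⟨w, hvw, isPrime_of_cutRankLossLeOne hG hcard (cutRankLossLeOne_pivot hvw), h⟩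
end

section
/- Let G be a prime graph and a, b, c distinct vertices with ρ_G({a,b,c}) = 2. Then there exists a graph G' pivot-equivalent to G such that {a,b,c} is a triplet of G', i.e., ρ_{G'}({a,b,c}) = 2 and ρ_{G'∖x}({a,b,c}−{x}) = 2 for each x ∈ {a,b,c}. -/
open Finset

variable {V : Type} [Fintype V] [DecidableEq V]

open scoped Classical

/-!
Let `W = V ∖ {a, b, c}` and let `r x ∈ GF(2)^W` be the row of `x` restricted to `W`. Since
`ρ({a, b, c}) = 2`, the three rows span a plane, so either they are nonzero and pairwise distinct
(and `{a, b, c}` is already a triplet), or one of them is zero, or two of them coincide.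

Primality gives `ρ({p, q}) = 2` for all `p ≠ q`: no vertex has degree at most one and no two
vertices are twins. Hence if `r z = 0` then `z` is adjacent to both `x` and `y`, and if
`r x = r y` then exactly one of `x`, `y` is adjacent to `z`. In the latter case, pivoting an edge `zv` with `v ∈ W` gives rows with
`r' x + r' y + r' z = 0`, all nonzero. In the former case, pivoting `xy` gives the rows
`r y, r x, r x + r y` when `x ∼ y`; otherwise pivoting an edge `xv` with `v ∈ W` makes `x` and
`z` twins separated by `y`, and one more pivot finishes.
-/

namespace ZModModule

variable {M : Type*} [AddCommGroup M] [Module (ZMod 2) M]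

lemma add_eq_zero_iff_eq {u v : M} : u + v = 0 ↔ u = v := by
  rw [← sub_eq_add, sub_eq_zero]

lemma add_smul_ne_zero {u w : M} (hu : u ≠ 0) (huw : u ≠ w) (s : ZMod 2) :
    u + s • w ≠ 0 := by
  have h01 : ∀ s : ZMod 2, s = 0 ∨ s = 1 := by decide
  rcases h01 s with rfl | rfl <;> simpa [add_eq_zero_iff_eq]

lemma linearIndependent_pair {u v : M} (hu : u ≠ 0) (hv : v ≠ 0) (huv : u ≠ v) :
    LinearIndependent (ZMod 2) ![u, v] := by
  have h01 : ∀ s : ZMod 2, s = 0 ∨ s = 1 := by decide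
  rw [LinearIndependent.pair_iff]
  intro s t hst
  rcases h01 s with rfl | rfl <;> rcases h01 t with rfl | rfl <;>
    simp_all [add_eq_zero_iff_eq]

lemma finrank_span_pair {u v : M} (hu : u ≠ 0) (hv : v ≠ 0) (huv : u ≠ v) :
    Module.finrank (ZMod 2) (Submodule.span (ZMod 2) {u, v}) = 2 := by
  have h := finrank_span_eq_card (linearIndependent_pair hu hv huv)
  rwa [Matrix.range_cons_cons_empty, Fintype.card_fin] at h

end ZModModule

lemma finrank_span_le_one_of_subset_pair_zero {K M : Type*} [DivisionRing K] [AddCommGroup M]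
    [Module K M] {s : Set M} {t : M} (h : s ⊆ {0, t}) :
    Module.finrank K (Submodule.span K s) ≤ 1 := by
  have hle : Submodule.span K s ≤ K ∙ t :=
    (Submodule.span_mono h).trans_eq Submodule.span_insert_zero
  exact (Submodule.finrank_mono hle).trans (by simpa using finrank_span_le_card (R := K) {t})

section AdjMatrix

variable {G : SimpleGraph V} {a b c : V}

local notation "A" => G.adjMatrix (ZMod 2)

omit [Fintype V] [DecidableEq V] in
lemma adjMatrix_eq_one (h : G.Adj a b) : A a b = 1 := if_pos h

omit [Fintype V] [DecidableEq V] in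
lemma adjMatrix_eq_zero (h : ¬ G.Adj a b) : A a b = 0 := if_neg h

omit [Fintype V] [DecidableEq V] in
lemma not_adj_iff_of_adjMatrix_add_eq_one (h : A a c + A b c = 1) :
    ¬ (G.Adj a c ↔ G.Adj b c) := fun hiff => by
  simp only [SimpleGraph.adjMatrix_apply, hiff] at h
  split_ifs at h <;> revert h <;> decide

end AdjMatrix

section Pivot

variable (G : SimpleGraph V) {v w x y : V}

local notation "A" => G.adjMatrix (ZMod 2)

lemma pivot_adj_iff : (pivot G v w).Adj x y ↔ x ≠ y ∧
    (G.Adj (Equiv.swap v w x) (Equiv.swap v w y) ↔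
      ¬ PivotToggle G v w (Equiv.swap v w x) (Equiv.swap v w y)) :=
  and_congr_right fun _ => xor_iff_iff_not

/-- Over GF(2), `A v x * A w y + A w x * A v y = 1` says exactly that `x` and `y` lie in
different ones of the three classes toggled by `PivotToggle`. -/
lemma pivot_adjMatrix_apply_of_ne (hxv : x ≠ v) (hxw : x ≠ w) (hyv : y ≠ v) (hyw : y ≠ w) :
    (pivot G v w).adjMatrix (ZMod 2) x y = A x y + A v x * A w y + A w x * A v y := by
  rw [SimpleGraph.adjMatrix_apply, if_congr (pivot_adj_iff G) rfl rfl]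
  simp only [SimpleGraph.adjMatrix_apply, Equiv.swap_apply_of_ne_of_ne hxv hxw,
    Equiv.swap_apply_of_ne_of_ne hyv hyw, PivotToggle, SideA, SideB, SideC]
  obtain rfl | hxy := eq_or_ne x y
  · split_ifs <;> simp_all; decide
  · by_cases G.Adj x y <;> by_cases G.Adj v x <;> by_cases G.Adj w x <;>
      by_cases G.Adj v y <;> by_cases G.Adj w y <;> simp_all <;> decide

lemma pivot_adjMatrix_apply_left (hyv : y ≠ v) (hyw : y ≠ w) :
    (pivot G v w).adjMatrix (ZMod 2) v y = A w y := by
  rw [SimpleGraph.adjMatrix_apply, if_congr (pivot_adj_iff G) rfl rfl]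
  simp [Equiv.swap_apply_of_ne_of_ne hyv hyw, PivotToggle, SideA, SideB, SideC, hyv.symm]

lemma pivot_adjMatrix_apply_right (hyv : y ≠ v) (hyw : y ≠ w) :
    (pivot G v w).adjMatrix (ZMod 2) w y = A v y := by
  rw [SimpleGraph.adjMatrix_apply, if_congr (pivot_adj_iff G) rfl rfl]
  simp [Equiv.swap_apply_of_ne_of_ne hyv hyw, PivotToggle, SideA, SideB, SideC, hyw.symm]

lemma pivot_adjMatrix_apply_left_right : (pivot G v w).adjMatrix (ZMod 2) v w = A v w := by
  rw [SimpleGraph.adjMatrix_apply, if_congr (pivot_adj_iff G) rfl rfl]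
  obtain rfl | hvw := eq_or_ne v w
  · simp
  · simp [PivotToggle, SideA, SideB, SideC, hvw, G.adj_comm w v]

end Pivot

noncomputable def rowOn (G : SimpleGraph V) (Y : Finset V) (x : V) : Y → ZMod 2 :=
  fun j => G.adjMatrix (ZMod 2) x j

section Rows

variable (G : SimpleGraph V) {Y : Finset V} {p q x y z : V}

omit [DecidableEq V] in
lemma cutRankOn_eq_finrank_span (X Y : Finset V) :
    cutRankOn G X Y = Module.finrank (ZMod 2) (Submodule.span (ZMod 2) (rowOn G Y '' X)) := by
  rw [cutRankOn, Matrix.rank_eq_finrank_span_row, ← Subtype.range_coe (s := (X : Set V)),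
    ← Set.range_comp]
  rfl

omit [Fintype V] in
lemma cutRank_le_card_sdiff (S X : Finset V) : cutRank G S X ≤ #(S \ X) :=
  (Matrix.rank_le_card_width _).trans_eq (Fintype.card_coe _)

lemma cutRank_pair (S : Finset V) :
    cutRank G S {p, q} = Module.finrank (ZMod 2)
      (Submodule.span (ZMod 2) {rowOn G (S \ {p, q}) p, rowOn G (S \ {p, q}) q}) := by
  rw [cutRank, cutRankOn_eq_finrank_span, coe_pair, Set.image_pair]

lemma cutRank_triple (S : Finset V) :
    cutRank G S {x, y, z} = Module.finrank (ZMod 2) (Submodule.span (ZMod 2)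
      {rowOn G (S \ {x, y, z}) x, rowOn G (S \ {x, y, z}) y, rowOn G (S \ {x, y, z}) z}) := by
  rw [cutRank, cutRankOn_eq_finrank_span, coe_insert, coe_pair, Set.image_insert_eq,
    Set.image_pair]

lemma cutRank_univ_sdiff_singleton {T : Finset V} (hx : x ∈ T) :
    cutRank G (univ \ {x}) (T \ {x}) = cutRankOn G (T \ {x}) (univ \ T) := by
  rw [cutRank, sdiff_sdiff_sdiff_cancel_right (singleton_subset_iff.2 hx)]

omit [Fintype V] [DecidableEq V] in
lemma rowOn_eq_zero_iff : rowOn G Y p = 0 ↔ ∀ j ∈ Y, ¬ G.Adj p j := by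
  simp [funext_iff, rowOn, SimpleGraph.adjMatrix_apply]

omit [Fintype V] [DecidableEq V] in
lemma exists_adj_of_rowOn_ne_zero (h : rowOn G Y p ≠ 0) : ∃ j ∈ Y, G.Adj p j := by
  by_contra! h'
  exact h ((rowOn_eq_zero_iff G).2 h')

omit [Fintype V] [DecidableEq V] in
lemma rowOn_eq_rowOn_iff :
    rowOn G Y p = rowOn G Y q ↔ ∀ j ∈ Y, (G.Adj p j ↔ G.Adj q j) := by
  simp only [funext_iff, rowOn, SimpleGraph.adjMatrix_apply, Subtype.forall]
  refine forall₂_congr fun j _ => ?_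
  by_cases G.Adj p j <;> by_cases G.Adj q j <;> simp [*]

end Rows

section Prime

variable {G : SimpleGraph V} {p q s : V}

lemma IsPrime.two_le_cutRank_pair (hp : IsPrime G univ) (hV : 4 ≤ Fintype.card V)
    (hpq : p ≠ q) : 2 ≤ cutRank G univ {p, q} := by
  by_contra h
  refine hp.2 {p, q} ⟨subset_univ _, by omega, (card_pair hpq).ge, ?_⟩
  rw [card_univ_sdiff, card_pair hpq]
  omega

lemma IsPrime.rowOn_pair_not_subset (hp : IsPrime G univ) (hV : 4 ≤ Fintype.card V)
    (hpq : p ≠ q) (t : ↥(univ \ {p, q} : Finset V) → ZMod 2) :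
    ¬ {rowOn G (univ \ {p, q}) p, rowOn G (univ \ {p, q}) q} ⊆ ({0, t} : Set _) := fun h => by
  have := finrank_span_le_one_of_subset_pair_zero (K := ZMod 2) h
  have := hp.two_le_cutRank_pair hV hpq
  rw [cutRank_pair] at this
  omega

lemma IsPrime.exists_adj (hp : IsPrime G univ) (hV : 4 ≤ Fintype.card V) (hpq : p ≠ q) :
    ∃ j, j ≠ q ∧ G.Adj p j := by
  by_contra! h
  refine hp.rowOn_pair_not_subset hV hpq (rowOn G (univ \ {p, q}) q) ?_
  rw [(rowOn_eq_zero_iff G).2 fun j hj => h j (by simp_all)]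

lemma IsPrime.exists_not_adj_iff (hp : IsPrime G univ) (hV : 4 ≤ Fintype.card V)
    (hpq : p ≠ q) : ∃ j, j ≠ p ∧ j ≠ q ∧ ¬ (G.Adj p j ↔ G.Adj q j) := by
  by_contra! h
  refine hp.rowOn_pair_not_subset hV hpq (rowOn G (univ \ {p, q}) q) ?_
  rw [(rowOn_eq_rowOn_iff G).2 fun j hj => h j (by simp_all) (by simp_all)]
  simp

lemma IsPrime.adj_of_forall_not_adj (hp : IsPrime G univ) (hV : 4 ≤ Fintype.card V)
    (hpq : p ≠ q) (h : ∀ j, j ≠ q → j ≠ s → ¬ G.Adj p j) : G.Adj p s := by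
  obtain ⟨j, hjq, hpj⟩ := hp.exists_adj hV hpq
  by_contra hps
  exact h j hjq (by rintro rfl; exact hps hpj) hpj

lemma IsPrime.not_adj_iff_of_forall_adj_iff (hp : IsPrime G univ) (hV : 4 ≤ Fintype.card V)
    (hpq : p ≠ q) (h : ∀ j, j ≠ p → j ≠ q → j ≠ s → (G.Adj p j ↔ G.Adj q j)) :
    ¬ (G.Adj p s ↔ G.Adj q s) := fun hs => by
  obtain ⟨j, hjp, hjq, hj⟩ := hp.exists_not_adj_iff hV hpq
  obtain rfl | hjs := eq_or_ne j s
  · exact hj hs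
  · exact hj (h j hjp hjq hjs)

end Prime

section Triplet

variable (G : SimpleGraph V) {a b c : V}

lemma four_le_card_of_cutRank_triple (hab : a ≠ b) (hac : a ≠ c) (hbc : b ≠ c)
    (hr : cutRank G univ {a, b, c} = 2) : 4 ≤ Fintype.card V := by
  have := cutRank_le_card_sdiff G univ {a, b, c}
  rw [card_univ_sdiff, card_eq_three.2 ⟨a, b, c, hab, hac, hbc, rfl⟩] at this
  omega

lemma rowOn_triple_not_subset (hr : cutRank G univ {a, b, c} = 2)
    (t : ↥(univ \ {a, b, c} : Finset V) → ZMod 2) :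
    ¬ {rowOn G (univ \ {a, b, c}) a, rowOn G (univ \ {a, b, c}) b,
        rowOn G (univ \ {a, b, c}) c} ⊆ ({0, t} : Set _) := fun h => by
  have := finrank_span_le_one_of_subset_pair_zero (K := ZMod 2) h
  rw [cutRank_triple] at hr
  omega

lemma triplet_congr {x y z : V} (h : ({x, y, z} : Finset V) = {a, b, c}) :
    Triplet G x y z ↔ Triplet G a b c := by
  unfold Triplet; rw [h]

lemma exists_pivotEquiv_triplet_congr {x y z : V} (h : ({x, y, z} : Finset V) = {a, b, c}) :
    (∃ G', PivotEquiv G G' ∧ Triplet G' x y z) →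
      ∃ G', PivotEquiv G G' ∧ Triplet G' a b c :=
  fun ⟨G', hG', ht⟩ => ⟨G', hG', (triplet_congr G' h).1 ht⟩

lemma triplet_of_rowOn_ne (hab : a ≠ b) (hac : a ≠ c) (hbc : b ≠ c)
    (hr : cutRank G univ {a, b, c} = 2)
    (ha : rowOn G (univ \ {a, b, c}) a ≠ 0) (hb : rowOn G (univ \ {a, b, c}) b ≠ 0)
    (hc : rowOn G (univ \ {a, b, c}) c ≠ 0)
    (hab' : rowOn G (univ \ {a, b, c}) a ≠ rowOn G (univ \ {a, b, c}) b)
    (hac' : rowOn G (univ \ {a, b, c}) a ≠ rowOn G (univ \ {a, b, c}) c)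
    (hbc' : rowOn G (univ \ {a, b, c}) b ≠ rowOn G (univ \ {a, b, c}) c) :
    Triplet G a b c := by
  refine ⟨hr, fun x hx => ?_⟩
  rw [cutRank_univ_sdiff_singleton G hx, cutRankOn_eq_finrank_span]
  simp only [mem_insert, mem_singleton] at hx
  rcases hx with rfl | rfl | rfl
  · rw [show ({x, b, c} : Finset V) \ {x} = {b, c} by grind, coe_pair, Set.image_pair]
    exact ZModModule.finrank_span_pair hb hc hbc'
  · rw [show ({a, x, c} : Finset V) \ {x} = {a, c} by grind, coe_pair, Set.image_pair]
    exact ZModModule.finrank_span_pair ha hc hac'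
  · rw [show ({a, b, x} : Finset V) \ {x} = {a, b} by grind, coe_pair, Set.image_pair]
    exact ZModModule.finrank_span_pair ha hb hab'

lemma triplet_of_rowOn_add_eq_zero (hab : a ≠ b) (hac : a ≠ c) (hbc : b ≠ c)
    (ha : rowOn G (univ \ {a, b, c}) a ≠ 0) (hb : rowOn G (univ \ {a, b, c}) b ≠ 0)
    (hc : rowOn G (univ \ {a, b, c}) c ≠ 0)
    (hsum : rowOn G (univ \ {a, b, c}) a + rowOn G (univ \ {a, b, c}) b +
      rowOn G (univ \ {a, b, c}) c = 0) :
    Triplet G a b c := by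
  set r := rowOn G (univ \ {a, b, c})
  have hc_eq : r c = r a + r b := (ZModModule.add_eq_zero_iff_eq.1 hsum).symm
  have hab' : r a ≠ r b := fun h => hc (by rw [hc_eq, h, ZModModule.add_self])
  have hspan : Submodule.span (ZMod 2) {r a, r b, r c} = Submodule.span (ZMod 2) {r a, r b} := by
    rw [Set.pair_comm (r b), Set.insert_comm]
    refine Submodule.span_insert_eq_span ?_
    rw [hc_eq]
    exact add_mem (Submodule.subset_span (by simp)) (Submodule.subset_span (by simp))
  refine triplet_of_rowOn_ne G hab hac hbc ?_ ha hb hc hab' ?_ ?_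
  · rw [cutRank_triple, hspan]
    exact ZModModule.finrank_span_pair ha hb hab'
  · exact fun h => hb (left_eq_add.1 (h.trans hc_eq))
  · exact fun h => ha (right_eq_add.1 (h.trans hc_eq))

end Triplet

section Construction

variable {G : SimpleGraph V} {x y z : V}

local notation "A" => G.adjMatrix (ZMod 2)

lemma rowOn_pivot {W : Finset V} {v t : V} (hzv : G.Adj z v) (hvW : v ∈ W) (hzW : z ∉ W)
    (htW : t ∉ W) (htz : t ≠ z) :
    rowOn (pivot G z v) W t =
      rowOn G W t + A z t • rowOn (pivot G z v) W z + A v t • rowOn G W z := by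
  have htv : t ≠ v := ne_of_mem_of_not_mem hvW htW |>.symm
  funext ⟨j, hj⟩
  simp only [rowOn, Pi.add_apply, Pi.smul_apply, smul_eq_mul]
  obtain rfl | hjv := eq_or_ne v j
  · rw [(pivot G z v).isSymm_adjMatrix.apply v t, pivot_adjMatrix_apply_right G htz htv,
      pivot_adjMatrix_apply_left_right, adjMatrix_eq_one hzv, G.isSymm_adjMatrix.apply v t]
    grind
  · have hjz : j ≠ z := ne_of_mem_of_not_mem hj hzW
    rw [pivot_adjMatrix_apply_of_ne G htz htv hjz hjv.symm,
      pivot_adjMatrix_apply_left G hjz hjv.symm]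

lemma triplet_pivot_of_twins {v : V} (hxy : x ≠ y) (hxz : x ≠ z) (hyz : y ≠ z)
    (htwin : rowOn G (univ \ {x, y, z}) x = rowOn G (univ \ {x, y, z}) y)
    (hx : rowOn G (univ \ {x, y, z}) x ≠ 0)
    (hxz' : rowOn G (univ \ {x, y, z}) x ≠ rowOn G (univ \ {x, y, z}) z)
    (hxz_adj : G.Adj x z) (hyz_adj : ¬ G.Adj y z) (hzv : G.Adj z v)
    (hvW : v ∈ univ \ {x, y, z}) :
    Triplet (pivot G z v) x y z := by
  set W := univ \ {x, y, z}
  have hxW : x ∉ W := by simp [W]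
  have hyW : y ∉ W := by simp [W]
  have hzW : z ∉ W := by simp [W]
  have hxv := rowOn_pivot hzv hvW hzW hxW hxz
  have hyv := rowOn_pivot hzv hvW hzW hyW hyz
  rw [adjMatrix_eq_one hxz_adj.symm, one_smul] at hxv
  rw [adjMatrix_eq_zero fun h => hyz_adj h.symm, zero_smul, add_zero] at hyv
  set r := rowOn G W
  set r' := rowOn (pivot G z v) W
  have hAv : A v x = A v y :=
    calc A v x = A x v := G.isSymm_adjMatrix.apply x v
      _ = A y v := congrFun htwin ⟨v, hvW⟩
      _ = A v y := G.isSymm_adjMatrix.apply v y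
  have hsum : r' x + r' y + r' z = 0 := by
    rw [hxv, hyv, htwin, hAv]
    funext j
    simp only [Pi.add_apply, Pi.smul_apply, smul_eq_mul, Pi.zero_apply]
    grind
  have hne : ∀ t, r' t ⟨v, hvW⟩ = 1 → r' t ≠ 0 := fun t ht h => by
    simpa [ht] using congrFun h ⟨v, hvW⟩
  refine triplet_of_rowOn_add_eq_zero _ hxy hxz hyz (hne x ?_) ?_ (hne z ?_) hsum
  · rw [show r' x ⟨v, hvW⟩ = _ from (pivot G z v).isSymm_adjMatrix.apply v x,
      pivot_adjMatrix_apply_right G hxz (ne_of_mem_of_not_mem hvW hxW).symm]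
    exact adjMatrix_eq_one hxz_adj.symm
  · change r' y ≠ 0
    rw [hyv]
    exact ZModModule.add_smul_ne_zero (htwin ▸ hx) (htwin ▸ hxz') _
  · exact (pivot_adjMatrix_apply_left_right G).trans (adjMatrix_eq_one hzv)

lemma exists_pivot_triplet_of_twins (hxy : x ≠ y) (hxz : x ≠ z) (hyz : y ≠ z)
    (htwin : rowOn G (univ \ {x, y, z}) x = rowOn G (univ \ {x, y, z}) y)
    (hx : rowOn G (univ \ {x, y, z}) x ≠ 0) (hz : rowOn G (univ \ {x, y, z}) z ≠ 0)
    (hxz' : rowOn G (univ \ {x, y, z}) x ≠ rowOn G (univ \ {x, y, z}) z)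
    (hsep : ¬ (G.Adj x z ↔ G.Adj y z)) :
    ∃ v, G.Adj z v ∧ Triplet (pivot G z v) x y z := by
  obtain ⟨v, hvW, hzv⟩ := exists_adj_of_rowOn_ne_zero G hz
  refine ⟨v, hzv, ?_⟩
  by_cases hyz_adj : G.Adj y z
  · have hperm : ({y, x, z} : Finset V) = {x, y, z} := insert_comm y x {z}
    refine (triplet_congr _ hperm).1 (triplet_pivot_of_twins hxy.symm hyz hxz ?_ ?_ ?_ hyz_adj
      (by tauto) hzv (by rwa [hperm])) <;> rw [hperm]
    exacts [htwin.symm, htwin ▸ hx, htwin ▸ hxz']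
  · exact triplet_pivot_of_twins hxy hxz hyz htwin hx hxz' (by tauto) hyz_adj hzv hvW

lemma triplet_pivot_of_rowOn_eq_zero (hxy : x ≠ y) (hxz : x ≠ z) (hyz : y ≠ z)
    (hzx : G.Adj z x) (hzy : G.Adj z y)
    (hz : rowOn G (univ \ {x, y, z}) z = 0) (hx : rowOn G (univ \ {x, y, z}) x ≠ 0)
    (hy : rowOn G (univ \ {x, y, z}) y ≠ 0)
    (hxy' : rowOn G (univ \ {x, y, z}) x ≠ rowOn G (univ \ {x, y, z}) y) :
    Triplet (pivot G x y) x y z := by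
  set W := univ \ {x, y, z}
  have hW : ∀ j ∈ W, j ≠ x ∧ j ≠ y ∧ j ≠ z := by simp [W]
  have hx' : rowOn (pivot G x y) W x = rowOn G W y := funext fun ⟨j, hj⟩ =>
    pivot_adjMatrix_apply_left G (hW j hj).1 (hW j hj).2.1
  have hy' : rowOn (pivot G x y) W y = rowOn G W x := funext fun ⟨j, hj⟩ =>
    pivot_adjMatrix_apply_right G (hW j hj).1 (hW j hj).2.1
  have hz' : rowOn (pivot G x y) W z = rowOn G W x + rowOn G W y := funext fun ⟨j, hj⟩ => by
    have hzj : A z j = 0 := congrFun hz ⟨j, hj⟩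
    simp only [rowOn, Pi.add_apply, pivot_adjMatrix_apply_of_ne G hxz.symm hyz.symm (hW j hj).1
      (hW j hj).2.1, hzj, G.isSymm_adjMatrix.apply z x, G.isSymm_adjMatrix.apply z y,
      adjMatrix_eq_one hzx, adjMatrix_eq_one hzy]
    ring
  refine triplet_of_rowOn_add_eq_zero _ hxy hxz hyz (hx' ▸ hy) (hy' ▸ hx) ?_ ?_
  · rw [hz']
    exact fun h => hxy' (ZModModule.add_eq_zero_iff_eq.1 h)
  · rw [hx', hy', hz', add_comm (rowOn G W y)]
    exact ZModModule.add_self _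

lemma exists_pivotEquiv_triplet_of_rowOn_eq_zero_of_not_adj (hxy : x ≠ y) (hxz : x ≠ z)
    (hyz : y ≠ z) (hzx : G.Adj z x) (hzy : G.Adj z y) (hxy_adj : ¬ G.Adj x y)
    (hz : rowOn G (univ \ {x, y, z}) z = 0) (hx : rowOn G (univ \ {x, y, z}) x ≠ 0)
    (hy : rowOn G (univ \ {x, y, z}) y ≠ 0)
    (hxy' : rowOn G (univ \ {x, y, z}) x ≠ rowOn G (univ \ {x, y, z}) y) :
    ∃ G', PivotEquiv G G' ∧ Triplet G' x y z := by
  set W := univ \ {x, y, z}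
  have hxW : x ∉ W := by simp [W]
  have hyW : y ∉ W := by simp [W]
  have hzW : z ∉ W := by simp [W]
  obtain ⟨v, hvW, hxv⟩ := exists_adj_of_rowOn_ne_zero G hx
  have hyv : y ≠ v := (ne_of_mem_of_not_mem hvW hyW).symm
  have hzv : z ≠ v := (ne_of_mem_of_not_mem hvW hzW).symm
  have hAvz : A v z = 0 := adjMatrix_eq_zero fun h => (rowOn_eq_zero_iff G).1 hz v hvW h.symm
  -- after pivoting `xv`, the vertices `x` and `z` are twins on `W`, separated by `y`
  have hz₁ := rowOn_pivot hxv hvW hxW hzW hxz.symm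
  rw [hz, adjMatrix_eq_one hzx.symm, hAvz, one_smul, zero_smul, zero_add, add_zero] at hz₁
  have hy₁ := rowOn_pivot hxv hvW hxW hyW hxy.symm
  rw [adjMatrix_eq_zero hxy_adj, zero_smul, add_zero] at hy₁
  set G₁ := pivot G x v
  have hsep : ¬ (G₁.Adj x y ↔ G₁.Adj z y) := by
    refine not_adj_iff_of_adjMatrix_add_eq_one ?_
    rw [pivot_adjMatrix_apply_left G hxy.symm hyv,
      pivot_adjMatrix_apply_of_ne G hxz.symm hzv hxy.symm hyv, hAvz,
      adjMatrix_eq_one hzy, adjMatrix_eq_one hzx.symm]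
    grind
  have hx₁v : rowOn G₁ W x ⟨v, hvW⟩ = 1 :=
    (pivot_adjMatrix_apply_left_right G).trans (adjMatrix_eq_one hxv)
  have hy₁v : rowOn G₁ W y ⟨v, hvW⟩ = 0 := by
    rw [show rowOn G₁ W y ⟨v, hvW⟩ = _ from G₁.isSymm_adjMatrix.apply v y,
      pivot_adjMatrix_apply_right G hxy.symm hyv, adjMatrix_eq_zero hxy_adj]
  have hx₁ : rowOn G₁ W x ≠ 0 := fun h => by simpa [hx₁v] using congrFun h ⟨v, hvW⟩
  have hxy₁ : rowOn G₁ W x ≠ rowOn G₁ W y := fun h => by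
    simpa [hx₁v, hy₁v] using congrFun h ⟨v, hvW⟩
  have hy₁' : rowOn G₁ W y ≠ 0 := hy₁ ▸ ZModModule.add_smul_ne_zero hy hxy'.symm _
  have hperm : ({x, z, y} : Finset V) = {x, y, z} := congrArg (insert x) (pair_comm z y)
  obtain ⟨w, hyw, ht⟩ := exists_pivot_triplet_of_twins hxz hxy hyz.symm
    (by rw [hperm]; exact hz₁.symm) (by rwa [hperm]) (by rwa [hperm]) (by rwa [hperm]) hsep
  exact ⟨pivot G₁ y w, .head ⟨x, v, hxv, rfl⟩ (.single ⟨y, w, hyw, rfl⟩),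
    (triplet_congr _ hperm).1 ht⟩

end Construction

section Reduction

variable {G : SimpleGraph V} {x y z : V}

lemma exists_pivotEquiv_triplet_of_rowOn_eq_zero (hp : IsPrime G univ) (hxy : x ≠ y)
    (hxz : x ≠ z) (hyz : y ≠ z) (hr : cutRank G univ {x, y, z} = 2)
    (hz : rowOn G (univ \ {x, y, z}) z = 0) :
    ∃ G', PivotEquiv G G' ∧ Triplet G' x y z := by
  have hV := four_le_card_of_cutRank_triple G hxy hxz hyz hr
  have hline := rowOn_triple_not_subset G hr
  have hzW : ∀ j, j ≠ x → j ≠ y → ¬ G.Adj z j := fun j hjx hjy hzj =>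
    (rowOn_eq_zero_iff G).1 hz j (by simp [hjx, hjy, hzj.ne']) hzj
  have hzx := hp.adj_of_forall_not_adj hV hyz.symm fun j hjy hjx => hzW j hjx hjy
  have hzy := hp.adj_of_forall_not_adj hV hxz.symm hzW
  set r := rowOn G (univ \ {x, y, z})
  have hx : r x ≠ 0 := fun h => hline (r y) (by simp [h, hz, Set.insert_subset_iff])
  have hy : r y ≠ 0 := fun h => hline (r x) (by simp [h, hz, Set.insert_subset_iff])
  have hxy' : r x ≠ r y := fun h => hline (r y) (by simp [h, hz, Set.insert_subset_iff])
  by_cases hxy_adj : G.Adj x y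
  · exact ⟨_, .single ⟨x, y, hxy_adj, rfl⟩,
      triplet_pivot_of_rowOn_eq_zero hxy hxz hyz hzx hzy hz hx hy hxy'⟩
  · exact exists_pivotEquiv_triplet_of_rowOn_eq_zero_of_not_adj hxy hxz hyz hzx hzy hxy_adj
      hz hx hy hxy'

lemma exists_pivotEquiv_triplet_of_rowOn_eq (hp : IsPrime G univ) (hxy : x ≠ y)
    (hxz : x ≠ z) (hyz : y ≠ z) (hr : cutRank G univ {x, y, z} = 2)
    (htwin : rowOn G (univ \ {x, y, z}) x = rowOn G (univ \ {x, y, z}) y) :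
    ∃ G', PivotEquiv G G' ∧ Triplet G' x y z := by
  have hV := four_le_card_of_cutRank_triple G hxy hxz hyz hr
  have hline := rowOn_triple_not_subset G hr
  have hsep := hp.not_adj_iff_of_forall_adj_iff (s := z) hV hxy fun j hjx hjy hjz =>
    (rowOn_eq_rowOn_iff G).1 htwin j (by simp [hjx, hjy, hjz])
  set r := rowOn G (univ \ {x, y, z})
  have hx : r x ≠ 0 := fun h => hline (r z) (by simp [← htwin, h])
  have hz : r z ≠ 0 := fun h => hline (r x) (by simp [← htwin, h, Set.insert_subset_iff])
  have hxz' : r x ≠ r z := fun h => hline (r x) (by simp [← htwin, h])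
  obtain ⟨v, hzv, ht⟩ := exists_pivot_triplet_of_twins hxy hxz hyz htwin hx hz hxz' hsep
  exact ⟨_, .single ⟨z, v, hzv, rfl⟩, ht⟩

end Reduction

theorem exists_pivotEquiv_triplet {G : SimpleGraph V} (hp : IsPrime G Finset.univ)
    {a b c : V} (hab : a ≠ b) (hac : a ≠ c) (hbc : b ≠ c)
    (hr : cutRank G Finset.univ {a, b, c} = 2) :
    ∃ G' : SimpleGraph V, PivotEquiv G G' ∧ Triplet G' a b c := by
  have hbca : ({b, c, a} : Finset V) = {a, b, c} := by rw [pair_comm, insert_comm]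
  have hacb : ({a, c, b} : Finset V) = {a, b, c} := by rw [pair_comm]
  set r := rowOn G (univ \ {a, b, c})
  by_cases hc : r c = 0
  · exact exists_pivotEquiv_triplet_of_rowOn_eq_zero hp hab hac hbc hr hc
  by_cases ha : r a = 0
  · exact exists_pivotEquiv_triplet_congr G hbca <| exists_pivotEquiv_triplet_of_rowOn_eq_zero hp
      hbc hab.symm hac.symm (by rwa [hbca]) (by rwa [hbca])
  by_cases hb : r b = 0
  · exact exists_pivotEquiv_triplet_congr G hacb <| exists_pivotEquiv_triplet_of_rowOn_eq_zero hp
      hac hab hbc.symm (by rwa [hacb]) (by rwa [hacb])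
  by_cases hab' : r a = r b
  · exact exists_pivotEquiv_triplet_of_rowOn_eq hp hab hac hbc hr hab'
  by_cases hac' : r a = r c
  · exact exists_pivotEquiv_triplet_congr G hacb <| exists_pivotEquiv_triplet_of_rowOn_eq hp
      hac hab hbc.symm (by rwa [hacb]) (by rwa [hacb])
  by_cases hbc' : r b = r c
  · exact exists_pivotEquiv_triplet_congr G hbca <| exists_pivotEquiv_triplet_of_rowOn_eq hp
      hbc hab.symm hac.symm (by rwa [hbca]) (by rwa [hbca])
  exact ⟨G, .refl, triplet_of_rowOn_ne G hab hac hbc hr ha hb hc hab' hac' hbc'⟩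
end
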